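/- If 0 ≤ I < 1, then for all nonnegative integers Z and L, the success probability of a time-restricted double-spending attack is no greater than that of a time-unrestricted double-spending attack: P_TR(I,Z,L) ≤ P_TU(I,Z); moreover, if 0 < I < 1 the inequality is strict: P_TR(I,Z,L) < P_TU(I,Z). -/

import Mathlib

/-!
Both probabilities are mixtures, with the same nonnegative weights, of `1 - P_I(m)` and of
`1 - F_L(m)`, where `F_L(m) = ∑_{i<L} a(i,m) (1-I)^i I^(m+1+i)` is the probability that the
attacker, `m` blocks behind, gets ahead before the honest miners find `L` more blocks. So it
suffices to show `F_L(m) < P_I(m)` for `0 < I < 1`. Splitting the paths counted by `a(i,m)`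
according to their first step gives the first-step recursion
`F_{L+1}(0) = I + (1-I) F_L(1)`, `F_{L+1}(m+1) = I F_{L+1}(m) + (1-I) F_L(m+2)`, and an
induction on `L` and `m` shows `F_L(m) < x^(m+1)` for every `x > 0` with `I + (1-I) x² ≤ x`.
Both `x = 1` and `x = I/(1-I)` qualify, and `P_I(m)` is `x^(m+1)` for one of them.
-/

/-- `pathCount i m` is the number of sequences `(s 1, …, s (m+2i+1))` with every entry `±1`,
exactly `i` entries equal to `+1` (hence `m+i+1` entries equal to `-1`), such that
`m + s 1 + ⋯ + s T ≥ 0` for every `T ≤ m + 2i` (the walk started at `m` first reaches `-1`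
exactly at the final step). -/
noncomputable def pathCount (i m : ℕ) : ℕ :=
  Nat.card {s : Fin (m + 2 * i + 1) → ℤ //
    (∀ t, s t = 1 ∨ s t = -1) ∧
    (Finset.univ.filter fun t => s t = 1).card = i ∧
    ∀ T : ℕ, T ≤ m + 2 * i →
      0 ≤ (m : ℤ) + ∑ t ∈ Finset.univ.filter (fun t : Fin (m + 2 * i + 1) => (t : ℕ) < T), s t}

/-- Success probability of a time-restricted double-spending attack with `Z` confirmation
blocks and time restriction of `L` honest blocks after confirmation. -/
noncomputable def P_TR (I : ℝ) (Z L : ℕ) : ℝ :=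
  1 - ∑ k ∈ Finset.range (Z + 2),
    (Nat.choose (k + Z) k : ℝ) * I ^ k * (1 - I) ^ (Z + 1) *
      (1 - ∑ i ∈ Finset.range L,
        (pathCount i (Z + 1 - k) : ℝ) * (1 - I) ^ i * I ^ (Z + 2 - k + i))

/-- The gambler's-ruin catch-up probability `P_I(m)` for a time-unrestricted attack. -/
noncomputable def gamblerP (I : ℝ) (m : ℕ) : ℝ :=
  if I < 1 / 2 then (I / (1 - I)) ^ (m + 1) else 1

/-- Success probability of a time-unrestricted double-spending attack with `Z` confirmation
blocks. -/
noncomputable def P_TU (I : ℝ) (Z : ℕ) : ℝ :=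
  1 - ∑ k ∈ Finset.range (Z + 2),
    (Nat.choose (k + Z) k : ℝ) * I ^ k * (1 - I) ^ (Z + 1) * (1 - gamblerP I (Z + 1 - k))


open Finset

theorem ncard_eq_ncard_cons_add_ncard_cons {α : Type*} {n : ℕ} {S : Set (Fin (n + 1) → α)}
    (hS : S.Finite) {a b : α} (hab : a ≠ b) (hhead : ∀ s ∈ S, s 0 = a ∨ s 0 = b) :
    S.ncard =
      {t : Fin n → α | Fin.cons a t ∈ S}.ncard + {t : Fin n → α | Fin.cons b t ∈ S}.ncard := by
  have hsplit :
      S = Fin.cons a '' {t | Fin.cons a t ∈ S} ∪ Fin.cons b '' {t | Fin.cons b t ∈ S} := by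
    ext s
    refine ⟨fun hs => ?_, by rintro (⟨t, ht, rfl⟩ | ⟨t, ht, rfl⟩) <;> exact ht⟩
    rcases hhead s hs with h | h
    · exact Or.inl ⟨Fin.tail s, by simpa [← h], by simp [← h]⟩
    · exact Or.inr ⟨Fin.tail s, by simpa [← h], by simp [← h]⟩
  have hdisj : Disjoint (Fin.cons a '' {t | Fin.cons a t ∈ S} : Set (Fin (n + 1) → α))
      (Fin.cons b '' {t | Fin.cons b t ∈ S}) := by
    rw [Set.disjoint_left]
    rintro _ ⟨t, -, rfl⟩ ⟨t', -, h⟩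
    exact hab (by simpa using (congrFun h 0).symm)
  conv_lhs => rw [hsplit]
  rw [Set.ncard_union_eq hdisj (hS.subset (Set.image_subset_iff.2 fun _ h => h))
      (hS.subset (Set.image_subset_iff.2 fun _ h => h))]
  exact congrArg₂ (· + ·)
    (Set.ncard_image_of_injective _ (Fin.cons_right_injective (α := fun _ => α) a))
    (Set.ncard_image_of_injective _ (Fin.cons_right_injective (α := fun _ => α) b))

section HittingPaths

variable {n : ℕ}

def partialSum (s : Fin n → ℤ) (T : ℕ) : ℤ :=
  ∑ t ∈ univ.filter (fun t : Fin n => (t : ℕ) < T), s t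

theorem partialSum_zero (s : Fin n → ℤ) : partialSum s 0 = 0 := by
  simp [partialSum]

theorem partialSum_cons_succ (c : ℤ) (s : Fin n → ℤ) (T : ℕ) :
    partialSum (Fin.cons c s : Fin (n + 1) → ℤ) (T + 1) = c + partialSum s T := by
  simp [partialSum, Finset.sum_filter, Fin.sum_univ_succ]

theorem forall_le_succ_nonneg_partialSum_cons_iff (m c : ℤ) (s : Fin n → ℤ) (N : ℕ) :
    (∀ T ≤ N + 1, 0 ≤ m + partialSum (Fin.cons c s : Fin (n + 1) → ℤ) T) ↔
      0 ≤ m ∧ ∀ T ≤ N, 0 ≤ m + c + partialSum s T := by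
  simp only [← Nat.lt_add_one_iff]
  rw [Nat.forall_lt_succ_left]
  simp only [partialSum_zero, partialSum_cons_succ, add_zero, add_assoc]

theorem card_filter_cons_eq_one (c : ℤ) (s : Fin n → ℤ) :
    #(univ.filter fun t => (Fin.cons c s : Fin (n + 1) → ℤ) t = 1) =
      (if c = 1 then 1 else 0) + #(univ.filter fun t => s t = 1) := by
  simp only [card_filter, Fin.sum_univ_succ, Fin.cons_zero, Fin.cons_succ]

/-- The conditions defining `pathCount`, with the length `n` left free so that prepending a step
stays within the family. -/
def IsHittingPath (i m : ℕ) (s : Fin n → ℤ) : Prop :=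
  (∀ t, s t = 1 ∨ s t = -1) ∧ #(univ.filter fun t => s t = 1) = i ∧
    ∀ T ≤ m + 2 * i, 0 ≤ (m : ℤ) + partialSum s T

theorem pathCount_eq_ncard {i m : ℕ} (h : n = m + 2 * i + 1) :
    pathCount i m = {s : Fin n → ℤ | IsHittingPath i m s}.ncard := by
  subst h
  exact Nat.card_coe_set_eq _

theorem finite_setOf_isHittingPath (i m : ℕ) : {s : Fin n → ℤ | IsHittingPath i m s}.Finite :=
  (Set.Finite.pi' fun _ => Set.toFinite {1, -1}).subset fun _ hs => hs.1

theorem isHittingPath_cons_neg_one_iff {i m : ℕ} (s : Fin n → ℤ) :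
    IsHittingPath i (m + 1) (Fin.cons (-1) s : Fin (n + 1) → ℤ) ↔ IsHittingPath i m s := by
  rw [IsHittingPath, IsHittingPath, Fin.forall_fin_succ, card_filter_cons_eq_one,
    add_right_comm, forall_le_succ_nonneg_partialSum_cons_iff]
  simp [add_nonneg]

theorem isHittingPath_cons_one_iff {i m : ℕ} (s : Fin n → ℤ) :
    IsHittingPath (i + 1) m (Fin.cons 1 s : Fin (n + 1) → ℤ) ↔ IsHittingPath i (m + 1) s := by
  rw [IsHittingPath, IsHittingPath, Fin.forall_fin_succ, card_filter_cons_eq_one,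
    show m + 2 * (i + 1) = m + 1 + 2 * i + 1 by ring, forall_le_succ_nonneg_partialSum_cons_iff]
  simp [add_comm 1]

theorem not_isHittingPath_zero_cons_neg_one {i : ℕ} (s : Fin n → ℤ) :
    ¬ IsHittingPath (i + 1) 0 (Fin.cons (-1) s : Fin (n + 1) → ℤ) := by
  rw [IsHittingPath, show 0 + 2 * (i + 1) = 2 * i + 1 + 1 by ring,
    forall_le_succ_nonneg_partialSum_cons_iff]
  intro h
  have := h.2.2.2 0 (Nat.zero_le _)
  simp [partialSum_zero] at this

end HittingPaths

theorem pathCount_zero (m : ℕ) : pathCount 0 m = 1 := by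
  rw [pathCount_eq_ncard (n := m + 1) (by ring), Set.ncard_eq_one]
  refine ⟨fun _ => -1, Set.ext fun s => ⟨fun hs => funext fun t => ?_, ?_⟩⟩
  · have hnone : ∀ t, s t ≠ 1 := by simpa using hs.2.1
    exact (hs.1 t).resolve_left (hnone t)
  · rintro rfl
    refine ⟨fun _ => Or.inr rfl, by simp, fun T hT => ?_⟩
    have hcard : #(univ.filter fun t : Fin (m + 1) => (t : ℕ) < T) ≤ m := by
      rw [Fin.card_filter_val_lt]; omega
    simp only [partialSum, sum_const, smul_neg, nsmul_eq_mul, mul_one]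
    linarith [(Nat.cast_le (α := ℤ)).2 hcard]

theorem pathCount_succ_zero (i : ℕ) : pathCount (i + 1) 0 = pathCount i 1 := by
  rw [pathCount_eq_ncard (n := 2 * i + 2 + 1) (by ring),
    pathCount_eq_ncard (n := 2 * i + 2) (by ring),
    ncard_eq_ncard_cons_add_ncard_cons (finite_setOf_isHittingPath _ _) (a := 1) (b := -1)
      (by norm_num) fun s hs => hs.1 0]
  simp only [Set.mem_ofPred_eq, isHittingPath_cons_one_iff, not_isHittingPath_zero_cons_neg_one,
    Set.ofPred_false, Set.ncard_empty, add_zero]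

theorem pathCount_succ_succ (i m : ℕ) :
    pathCount (i + 1) (m + 1) = pathCount (i + 1) m + pathCount i (m + 2) := by
  rw [pathCount_eq_ncard (n := m + 2 * i + 3 + 1) (by ring),
    pathCount_eq_ncard (n := m + 2 * i + 3) (by ring),
    pathCount_eq_ncard (n := m + 2 * i + 3) (by ring),
    ncard_eq_ncard_cons_add_ncard_cons (finite_setOf_isHittingPath _ _) (a := -1) (b := 1)
      (by norm_num) fun s hs => (hs.1 0).symm]
  simp only [Set.mem_ofPred_eq, isHittingPath_cons_neg_one_iff, isHittingPath_cons_one_iff]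

noncomputable def catchUpProb (p : ℝ) (L m : ℕ) : ℝ :=
  ∑ i ∈ range L, (pathCount i m : ℝ) * (1 - p) ^ i * p ^ (m + 1 + i)

theorem catchUpProb_succ_zero (p : ℝ) (L : ℕ) :
    catchUpProb p (L + 1) 0 = p + (1 - p) * catchUpProb p L 1 := by
  have hterm : ∀ i, (pathCount (i + 1) 0 : ℝ) * (1 - p) ^ (i + 1) * p ^ (0 + 1 + (i + 1)) =
      (1 - p) * ((pathCount i 1 : ℝ) * (1 - p) ^ i * p ^ (1 + 1 + i)) := fun i => by
    rw [pathCount_succ_zero]; ring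
  simp only [catchUpProb, sum_range_succ', hterm, ← mul_sum, pathCount_zero]
  ring

theorem catchUpProb_succ_succ (p : ℝ) (L m : ℕ) :
    catchUpProb p (L + 1) (m + 1) =
      p * catchUpProb p (L + 1) m + (1 - p) * catchUpProb p L (m + 2) := by
  have hterm : ∀ i,
      (pathCount (i + 1) (m + 1) : ℝ) * (1 - p) ^ (i + 1) * p ^ (m + 1 + 1 + (i + 1)) =
        p * ((pathCount (i + 1) m : ℝ) * (1 - p) ^ (i + 1) * p ^ (m + 1 + (i + 1))) +
          (1 - p) * ((pathCount i (m + 2) : ℝ) * (1 - p) ^ i * p ^ (m + 2 + 1 + i)) := fun i => by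
    rw [pathCount_succ_succ]; push_cast; ring
  simp only [catchUpProb, sum_range_succ', hterm, sum_add_distrib, ← mul_sum, pathCount_zero]
  ring

theorem catchUpProb_lt_pow {p x : ℝ} (hp0 : 0 ≤ p) (hp1 : p < 1) (hx : 0 < x)
    (hx_super : p + (1 - p) * x ^ 2 ≤ x) (L m : ℕ) : catchUpProb p L m < x ^ (m + 1) := by
  have hq : 0 < 1 - p := sub_pos.2 hp1
  induction L generalizing m with
  | zero => simpa [catchUpProb] using pow_pos hx (m + 1)
  | succ L ihL =>
    induction m with
    | zero =>
      calc catchUpProb p (L + 1) 0 = p + (1 - p) * catchUpProb p L 1 := catchUpProb_succ_zero p L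
        _ < p + (1 - p) * x ^ 2 := by gcongr; exact ihL 1
        _ ≤ x ^ (0 + 1) := by simpa using hx_super
    | succ m ihm =>
      calc catchUpProb p (L + 1) (m + 1)
          = p * catchUpProb p (L + 1) m + (1 - p) * catchUpProb p L (m + 2) :=
            catchUpProb_succ_succ p L m
        _ < p * x ^ (m + 1) + (1 - p) * x ^ (m + 2 + 1) :=
            add_lt_add_of_le_of_lt (by gcongr) (by gcongr; exact ihL (m + 2))
        _ = x ^ (m + 1) * (p + (1 - p) * x ^ 2) := by ring
        _ ≤ x ^ (m + 1) * x := by gcongr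
        _ = x ^ (m + 1 + 1) := by ring

theorem catchUpProb_lt_gamblerP {p : ℝ} (hp0 : 0 < p) (hp1 : p < 1) (L m : ℕ) :
    catchUpProb p L m < gamblerP p m := by
  have hq : 0 < 1 - p := sub_pos.2 hp1
  unfold gamblerP
  split_ifs
  · refine catchUpProb_lt_pow hp0.le hp1 (div_pos hp0 hq) (le_of_eq ?_) L m
    field_simp
    ring
  · simpa using catchUpProb_lt_pow hp0.le hp1 one_pos (by linarith) L m

theorem catchUpProb_le_gamblerP {p : ℝ} (hp0 : 0 ≤ p) (hp1 : p < 1) (L m : ℕ) :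
    catchUpProb p L m ≤ gamblerP p m := by
  rcases hp0.eq_or_lt with rfl | hp0
  · simp [catchUpProb, gamblerP]
  · exact (catchUpProb_lt_gamblerP hp0 hp1 L m).le

theorem P_TR_eq (I : ℝ) (Z L : ℕ) :
    P_TR I Z L = 1 - ∑ k ∈ range (Z + 2),
      (Nat.choose (k + Z) k : ℝ) * I ^ k * (1 - I) ^ (Z + 1) *
        (1 - catchUpProb I L (Z + 1 - k)) := by
  refine congrArg (1 - ·) (sum_congr rfl fun k hk => ?_)
  have hk : Z + 2 - k = Z + 1 - k + 1 := by rw [mem_range] at hk; omega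
  simp only [catchUpProb, hk]

/-- If `0 ≤ I < 1`, the success probability of a time-restricted double-spending attack is
no greater than that of a time-unrestricted one; if moreover `0 < I`, the inequality is
strict. -/
theorem P_TR_le_P_TU (I : ℝ) (hI0 : 0 ≤ I) (hI1 : I < 1) (Z L : ℕ) :
    P_TR I Z L ≤ P_TU I Z ∧ (0 < I → P_TR I Z L < P_TU I Z) := by
  have hq : 0 < 1 - I := sub_pos.2 hI1
  rw [P_TR_eq, P_TU]
  refine ⟨?_, fun hI => ?_⟩
  · gcongr with k
    exact catchUpProb_le_gamblerP hI0 hI1 L _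
  · gcongr with k
    · exact nonempty_range_add_one
    · have := Nat.choose_pos (Nat.le_add_right k Z)
      positivity
    · exact catchUpProb_lt_gamblerP hI hI1 L _
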